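/- Let F be a field of characteristic different from 2 and γ ∈ F with γ ≠ 0. The 4-dimensional non-unital associative F-algebra with basis a, b, c, d and nonzero products a² = b, ab = ba = d, c² = γd is isomorphic to the algebra with the same basis and nonzero products a² = b, ab = ba = d, c² = d. -/

import Mathlib

/-!
Rescaling the basis `a, b, c, d` of the algebra with `c² = d` to `u a, u² b, u² c, u³ d`
preserves the relations `a² = b`, `ab = ba = d` and turns `c² = d` into `c² = u d`.
So for `u = γ` the rescaled basis has the multiplication table of the first algebra, and
the linear map matching the two bases is multiplicative.
-/

/-- The multiplication table `a² = b`, `ab = ba = d`, `c² = γd` on a basis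
`a = v 0`, `b = v 1`, `c = v 2`, `d = v 3`; all other products of basis elements
zero. -/
def IsAGammaBasis {F A : Type*} [Field F] [NonUnitalRing A] [Module F A]
    (γ : F) (v : Module.Basis (Fin 4) F A) : Prop :=
  v 0 * v 0 = v 1 ∧ v 0 * v 1 = v 3 ∧ v 1 * v 0 = v 3 ∧ v 2 * v 2 = γ • v 3 ∧
  v 0 * v 2 = 0 ∧ v 0 * v 3 = 0 ∧ v 1 * v 1 = 0 ∧ v 1 * v 2 = 0 ∧ v 1 * v 3 = 0 ∧
  v 2 * v 0 = 0 ∧ v 2 * v 1 = 0 ∧ v 2 * v 3 = 0 ∧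
  v 3 * v 0 = 0 ∧ v 3 * v 1 = 0 ∧ v 3 * v 2 = 0 ∧ v 3 * v 3 = 0

theorem LinearMap.map_mul_of_map_mul_basis {ι R A B : Type*} [CommSemiring R]
    [NonUnitalNonAssocSemiring A] [Module R A] [SMulCommClass R A A] [IsScalarTower R A A]
    [NonUnitalNonAssocSemiring B] [Module R B] [SMulCommClass R B B] [IsScalarTower R B B]
    (b : Module.Basis ι R A) (f : A →ₗ[R] B)
    (h : ∀ i j, f (b i * b j) = f (b i) * f (b j)) (x y : A) :
    f (x * y) = f x * f y := by
  have hbilin : (LinearMap.mul R A).compr₂ f = (LinearMap.mul R B).compl₁₂ f f :=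
    LinearMap.ext_basis b b h
  exact LinearMap.congr_fun₂ hbilin x y

namespace IsAGammaBasis

variable {F A B : Type*} [Field F]
  [NonUnitalRing A] [Module F A] [SMulCommClass F A A] [IsScalarTower F A A]
  [NonUnitalRing B] [Module F B] [SMulCommClass F B B] [IsScalarTower F B B]

theorem unitsSMul {δ : F} {w : Module.Basis (Fin 4) F B} (hw : IsAGammaBasis δ w) (u : Fˣ) :
    IsAGammaBasis (u * δ) (w.unitsSMul ![u, u ^ 2, u ^ 2, u ^ 3]) := by
  obtain ⟨h1, h2, h3, h4, h5, h6, h7, h8, h9, h10, h11, h12, h13, h14, h15, h16⟩ := hw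
  simp only [IsAGammaBasis, Module.Basis.unitsSMul_apply, Units.smul_def, smul_mul_smul_comm,
    h1, h2, h3, h4, h5, h6, h7, h8, h9, h10, h11, h12, h13, h14, h15, h16, smul_zero, smul_smul]
  refine ⟨?_, ?_, ?_, ?_, by simp only [and_self]⟩ <;>
    congr 1 <;> simp only [Matrix.cons_val, Matrix.cons_val_zero, Matrix.cons_val_one,
      Units.val_pow_eq_pow_val] <;> ring

theorem exists_linearEquiv_map_mul {γ : F} {v : Module.Basis (Fin 4) F A}
    {w : Module.Basis (Fin 4) F B} (hv : IsAGammaBasis γ v) (hw : IsAGammaBasis γ w) :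
    ∃ e : A ≃ₗ[F] B, ∀ x y : A, e (x * y) = e x * e y := by
  obtain ⟨h1, h2, h3, h4, h5, h6, h7, h8, h9, h10, h11, h12, h13, h14, h15, h16⟩ := hv
  obtain ⟨g1, g2, g3, g4, g5, g6, g7, g8, g9, g10, g11, g12, g13, g14, g15, g16⟩ := hw
  refine ⟨v.equiv w (Equiv.refl _),
    (v.equiv w (Equiv.refl _)).toLinearMap.map_mul_of_map_mul_basis v fun i j => ?_⟩
  fin_cases i <;> fin_cases j <;>
    simp [Module.Basis.equiv_apply, h1, h2, h3, h4, h5, h6, h7, h8, h9, h10, h11, h12, h13, h14,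
      h15, h16, g1, g2, g3, g4, g5, g6, g7, g8, g9, g10, g11, g12, g13, g14, g15, g16]

end IsAGammaBasis

theorem stmt15_general {F A B : Type*} [Field F]
    [NonUnitalRing A] [Module F A] [SMulCommClass F A A] [IsScalarTower F A A]
    [NonUnitalRing B] [Module F B] [SMulCommClass F B B] [IsScalarTower F B B]
    (γ : F) (hγ : γ ≠ 0)
    (v : Module.Basis (Fin 4) F A) (w : Module.Basis (Fin 4) F B)
    (hv : IsAGammaBasis γ v) (hw : IsAGammaBasis 1 w) :
    ∃ e : A ≃ₗ[F] B, ∀ x y : A, e (x * y) = e x * e y := by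
  have hw' := hw.unitsSMul (Units.mk0 γ hγ)
  rw [Units.val_mk0, mul_one] at hw'
  exact hv.exists_linearEquiv_map_mul hw'

/-- Over a field of characteristic `≠ 2`, for any `γ ≠ 0` the algebra with table
`a² = b`, `ab = ba = d`, `c² = γd` is isomorphic to the one with table
`a² = b`, `ab = ba = d`, `c² = d`. -/
theorem stmt15 {F A B : Type*} [Field F] (hchar : (2 : F) ≠ 0)
    [NonUnitalRing A] [Module F A] [SMulCommClass F A A] [IsScalarTower F A A]
    [NonUnitalRing B] [Module F B] [SMulCommClass F B B] [IsScalarTower F B B]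
    (γ : F) (hγ : γ ≠ 0)
    (v : Module.Basis (Fin 4) F A) (w : Module.Basis (Fin 4) F B)
    (hv : IsAGammaBasis γ v) (hw : IsAGammaBasis 1 w) :
    ∃ e : A ≃ₗ[F] B, ∀ x y : A, e (x * y) = e x * e y :=
  stmt15_general γ hγ v w hv hw
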